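/- Let J, Z ∈ ℝ^{m×m} with J + Jᵀ > 0 and Z + Zᵀ ≥ 0, and set δ = Z(I + JZ)^{-1}. Then δ satisfies the quadratic matrix inequality δ (J + Jᵀ) δᵀ ≤ δ + δᵀ. -/

import Mathlib

/-!
Write `A = 1 + Z J`. If `A v = 0` then `v = -Z (J v)`, so `vᵀ J v = -(J v)ᵀ Z (J v) ≤ 0`,
which forces `v = 0` because `J + Jᵀ > 0`; hence `A` (and with it `1 + J Z`) is invertible.
The push-through identity gives `A δ = Z`, and expanding shows that conjugating
`δ + δᵀ - δ (J + Jᵀ) δᵀ` by `A` yields `Z + Zᵀ ≥ 0`.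
-/

open Matrix

namespace Matrix

variable {n : Type*} [Fintype n]

theorem dotProduct_add_transpose_mulVec {R : Type*} [CommSemiring R] (A : Matrix n n R)
    (v : n → R) : v ⬝ᵥ ((A + Aᵀ) *ᵥ v) = 2 * (v ⬝ᵥ (A *ᵥ v)) := by
  rw [add_mulVec, dotProduct_add, mulVec_transpose, dotProduct_mulVec, dotProduct_comm]
  ring

theorem PosSemidef.dotProduct_mulVec_nonneg_of_add_transpose {A : Matrix n n ℝ}
    (hA : (A + Aᵀ).PosSemidef) (v : n → ℝ) : 0 ≤ v ⬝ᵥ (A *ᵥ v) := by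
  have := hA.dotProduct_mulVec_nonneg v
  rw [star_trivial, dotProduct_add_transpose_mulVec] at this
  linarith

theorem PosDef.dotProduct_mulVec_pos_of_add_transpose {A : Matrix n n ℝ}
    (hA : (A + Aᵀ).PosDef) {v : n → ℝ} (hv : v ≠ 0) : 0 < v ⬝ᵥ (A *ᵥ v) := by
  have := hA.dotProduct_mulVec_pos hv
  rw [star_trivial, dotProduct_add_transpose_mulVec] at this
  linarith

variable [DecidableEq n]

theorem isUnit_one_add_mul_of_posSemidef_of_posDef {Z J : Matrix n n ℝ}
    (hZ : (Z + Zᵀ).PosSemidef) (hJ : (J + Jᵀ).PosDef) : IsUnit (1 + Z * J) := by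
  rw [← mulVec_injective_iff_isUnit, ← coe_mulVecLin, injective_iff_map_eq_zero]
  intro v hv
  rw [coe_mulVecLin] at hv
  have hv' : v = -(Z *ᵥ (J *ᵥ v)) := by
    rw [add_mulVec, one_mulVec, ← mulVec_mulVec] at hv
    exact eq_neg_of_add_eq_zero_left hv
  have hJv : v ⬝ᵥ (J *ᵥ v) ≤ 0 := by
    have hZJv := hZ.dotProduct_mulVec_nonneg_of_add_transpose (J *ᵥ v)
    calc v ⬝ᵥ (J *ᵥ v) = -((J *ᵥ v) ⬝ᵥ (Z *ᵥ (J *ᵥ v))) := by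
          nth_rw 1 [hv']
          rw [neg_dotProduct, dotProduct_comm]
      _ ≤ 0 := neg_nonpos.mpr hZJv
  by_contra hne
  exact hJv.not_gt (hJ.dotProduct_mulVec_pos_of_add_transpose hne)

theorem one_add_mul_mul_mul_inv_one_add_mul {R : Type*} [CommRing R] (Z J : Matrix n n R)
    (h : IsUnit (1 + J * Z)) : (1 + Z * J) * (Z * (1 + J * Z)⁻¹) = Z := by
  rw [← mul_assoc, add_mul, one_mul, mul_assoc, ← mul_one_add, mul_assoc,
    mul_nonsing_inv _ ((isUnit_iff_isUnit_det _).mp h), mul_one]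

theorem one_add_mul_conj_add_transpose_sub {R : Type*} [CommRing R] {Z J δ : Matrix n n R}
    (h : (1 + Z * J) * δ = Z) :
    (1 + Z * J) * (δ + δᵀ - δ * (J + Jᵀ) * δᵀ) * (1 + Z * J)ᵀ = Z + Zᵀ := by
  have ht : δᵀ * (1 + Z * J)ᵀ = Zᵀ := by rw [← transpose_mul, h]
  calc (1 + Z * J) * (δ + δᵀ - δ * (J + Jᵀ) * δᵀ) * (1 + Z * J)ᵀ
      = ((1 + Z * J) * δ) * (1 + Z * J)ᵀ + (1 + Z * J) * (δᵀ * (1 + Z * J)ᵀ)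
          - ((1 + Z * J) * δ) * (J + Jᵀ) * (δᵀ * (1 + Z * J)ᵀ) := by noncomm_ring
    _ = Z + Zᵀ := by
      rw [h, ht, transpose_add, transpose_one, transpose_mul]
      noncomm_ring

end Matrix

theorem stmt3 (m : ℕ) (J Z : Matrix (Fin m) (Fin m) ℝ)
    (hJ : (J + Jᵀ).PosDef) (hZ : (Z + Zᵀ).PosSemidef)
    (δ : Matrix (Fin m) (Fin m) ℝ) (hδ : δ = Z * (1 + J * Z)⁻¹) :
    (δ + δᵀ - δ * (J + Jᵀ) * δᵀ).PosSemidef := by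
  have hA : IsUnit (1 + Z * J) := isUnit_one_add_mul_of_posSemidef_of_posDef hZ hJ
  have hA' : IsUnit (1 + J * Z) := by
    rwa [isUnit_iff_isUnit_det, ← det_one_add_mul_comm, ← isUnit_iff_isUnit_det]
  rw [← hA.posSemidef_star_right_conjugate_iff, star_eq_conjTranspose,
    conjTranspose_eq_transpose_of_trivial, one_add_mul_conj_add_transpose_sub]
  · exact hZ
  · rw [hδ, one_add_mul_mul_mul_inv_one_add_mul Z J hA']
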